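/- arXiv:math/0301124 — 3 statements merged into one kernel-verified Lean document; each statement's English description precedes it below -/
import Mathlib

section
/- Let X and Y be locally compact Hausdorff spaces and p : Y → X a continuous surjection. Let φ : C₀(Y) → C₀(X) be a positive C₀(X)-functional, i.e. a linear map such that φ(z) ≥ 0 whenever z ≥ 0 and φ((f∘p)·z) = f·φ(z) for all f ∈ C₀(X) and z ∈ C₀(Y). Then for every x ∈ X there exists a unique positive linear functional φ_x : C₀(p⁻¹{x}) → ℂ such that (φ(z))(x) = φ_x(z|_{p⁻¹{x}}) for every z ∈ C₀(Y). -/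
open scoped ZeroAtInfty ComplexOrder

/-!
Evaluation at `x` turns `φ` into a positive functional `ψ = ev_x ∘ φ` on `C₀(Y)`, and `φₓ` has
to be the factorisation of `ψ` through the restriction map `C₀(Y) → C₀(p⁻¹{x})`, which is
surjective by Tietze's theorem on the one-point compactifications. So everything comes down to
showing that `ψ` kills every `z` vanishing on the fibre.

If `z` vanishes off a compact set `K` disjoint from the fibre, take an Urysohn function `f` on `X`
with `f = 1` on `p(K)` and `f(x) = 0`; then `z = (f ∘ p) z`, so `ψ z = f(x) ψ z = 0`. If `z ≥ 0`
vanishes on the fibre, then for `ε > 0` the function `z - min(z, ε)` is of this kind, while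
`min(z, ε) ≤ √ε √z` gives `ψ z = ψ (min(z, ε)) ≤ √ε ψ(√z)`; letting `ε → 0` yields `ψ z = 0`.
A general `z` is a linear combination of four nonnegative functions vanishing where `z` does.
-/

open Filter Topology

universe u v

lemma Real.min_le_sqrt_mul_sqrt {a ε : ℝ} (ha : 0 ≤ a) (hε : 0 ≤ ε) : min a ε ≤ √ε * √a :=
  calc min a ε = √(min a ε * min a ε) := (Real.sqrt_mul_self (le_min ha hε)).symm
    _ ≤ √(ε * a) := Real.sqrt_le_sqrt (mul_le_mul (min_le_right _ _) (min_le_left _ _)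
        (le_min ha hε) hε)
    _ = √ε * √a := Real.sqrt_mul hε a

namespace Complex

def rePosPart : C(ℂ, ℂ) := ⟨fun w => ((max w.re 0 : ℝ) : ℂ), by fun_prop⟩

lemma rePosPart_apply (w : ℂ) : rePosPart w = ((max w.re 0 : ℝ) : ℂ) := rfl

lemma rePosPart_zero : rePosPart 0 = 0 := by simp [rePosPart_apply]

lemma zero_le_rePosPart (w : ℂ) : 0 ≤ rePosPart w := by
  simp [rePosPart_apply, zero_le_real]

lemma rePosPart_of_nonneg {w : ℂ} (hw : 0 ≤ w) : rePosPart w = w := by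
  rw [rePosPart_apply, max_eq_left (nonneg_iff.mp hw).1, ← eq_re_of_ofReal_le (r := 0) (by simpa)]

lemma rePosPart_sub_add_I_mul (w : ℂ) :
    rePosPart w - rePosPart (-w) + I * (rePosPart (-I * w) - rePosPart (I * w)) = w := by
  apply Complex.ext <;> simp [rePosPart_apply, max_zero_sub_max_neg_zero_eq_self]

end Complex

lemma LinearMap.exists_comp_eq_of_ker_le {R M N P : Type*} [Ring R] [AddCommGroup M] [Module R M]
    [AddCommGroup N] [Module R N] [AddCommGroup P] [Module R P] {f : M →ₗ[R] N}
    (hf : Function.Surjective f) {g : M →ₗ[R] P} (h : ker f ≤ ker g) :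
    ∃ g' : N →ₗ[R] P, g' ∘ₗ f = g :=
  ⟨(ker f).liftQ g h ∘ₗ (f.quotKerEquivOfSurjective hf).symm, by ext; simp⟩

namespace ZeroAtInftyContinuousMap

section compLeft

variable {α β γ : Type*} [TopologicalSpace α] [TopologicalSpace β] [Zero β]
  [TopologicalSpace γ] [Zero γ]

def compLeft (g : C(β, γ)) (hg : g 0 = 0) (f : C₀(α, β)) : C₀(α, γ) where
  toFun := g ∘ f
  continuous_toFun := g.continuous.comp f.continuous
  zero_at_infty' := by simpa [hg] using (g.continuous.tendsto 0).comp (zero_at_infty f)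

@[simp]
lemma compLeft_apply (g : C(β, γ)) (hg : g 0 = 0) (f : C₀(α, β)) (a : α) :
    compLeft g hg f a = g (f a) := rfl

end compLeft

variable {α : Type u} [TopologicalSpace α]

lemma isCompact_setOf_le_norm {E : Type*} [SeminormedAddCommGroup E] (f : C₀(α, E)) {ε : ℝ}
    (hε : 0 < ε) : IsCompact {a | ε ≤ ‖f a‖} := by
  obtain ⟨K, hK, hsub⟩ := mem_cocompact'.mp (zero_at_infty f (Metric.ball_mem_nhds 0 hε))
  exact hK.of_isClosed_subset (isClosed_le continuous_const (map_continuous f).norm)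
    fun a ha => hsub (by simpa using ha)

variable {F : Set α}

lemma exists_extension_of_isClosed [T2Space α] [LocallyCompactSpace α] {δ : Type v}
    [TopologicalSpace δ] [Zero δ] [TietzeExtension.{u, v} δ] (hF : IsClosed F) (ζ : C₀(F, δ)) :
    ∃ z : C₀(α, δ), ∀ a : F, z a = ζ a := by
  have hval : IsClosedEmbedding ((↑) : F → α) := hF.isClosedEmbedding_subtypeVal
  have hcc : Tendsto ((↑) : F → α) (coclosedCompact F) (coclosedCompact α) := by
    simpa only [coclosedCompact_eq_cocompact] using hval.tendsto_cocompact
  have hq : IsClosedEmbedding (OnePoint.map ((↑) : F → α)) :=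
    (OnePoint.continuous_map hval.continuous hcc).isClosedEmbedding
      (Option.map_injective Subtype.val_injective)
  obtain ⟨g, hg⟩ := (OnePoint.continuousMapMk ⟨ζ, map_continuous ζ⟩ 0
    (by rw [coclosedCompact_eq_cocompact]; exact zero_at_infty ζ)).exists_extension hq
  have hg' := DFunLike.congr_fun hg
  refine ⟨⟨g.comp ⟨(↑), OnePoint.continuous_coe⟩, ?_⟩, fun a => hg' a⟩
  have hg0 : g OnePoint.infty = 0 := hg' OnePoint.infty
  simpa [hg0] using (g.continuous.tendsto OnePoint.infty).comp
    (coclosedCompact_eq_cocompact (X := α) ▸ OnePoint.tendsto_coe_infty)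

variable {R : Type*} {E : Type v} [Semiring R] [TopologicalSpace E] [AddCommMonoid E]
  [ContinuousAdd E] [Module R E] [ContinuousConstSMul R E]

def restrict (hF : IsClosed F) : C₀(α, E) →ₗ[R] C₀(F, E) :=
  compLinearMap ⟨⟨(↑), continuous_subtype_val⟩,
    hF.isClosedEmbedding_subtypeVal.tendsto_cocompact⟩

lemma restrict_surjective [T2Space α] [LocallyCompactSpace α] [TietzeExtension.{u, v} E]
    (hF : IsClosed F) : Function.Surjective (restrict (R := R) (E := E) hF) := fun ζ =>
  (exists_extension_of_isClosed hF ζ).imp fun _ hz => ext hz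

end ZeroAtInftyContinuousMap

open ZeroAtInftyContinuousMap (compLeft compLeft_apply isCompact_setOf_le_norm)
open Complex

theorem apply_eq_zero_of_nonneg_of_eqOn_zero {Y : Type*} [TopologicalSpace Y]
    {ψ : C₀(Y, ℂ) →ₗ[ℂ] ℂ} (hψ : ∀ z : C₀(Y, ℂ), (∀ y, 0 ≤ z y) → 0 ≤ ψ z) {F : Set Y}
    (hloc : ∀ K, IsCompact K → Disjoint K F → ∀ z : C₀(Y, ℂ), (∀ y ∉ K, z y = 0) → ψ z = 0)
    {z : C₀(Y, ℂ)} (hz : ∀ y, 0 ≤ z y) (hzF : ∀ y ∈ F, z y = 0) : ψ z = 0 := by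
  have hre (y : Y) : z y = (z y).re := eq_re_of_ofReal_le (by rw [ofReal_zero]; exact hz y)
  have hre_nonneg (y : Y) : 0 ≤ (z y).re := by simpa using (nonneg_iff.mp (hz y)).1
  let s := compLeft ⟨fun w => (√w.re : ℂ), by fun_prop⟩ (by simp) z
  have hbound : ∀ ε > 0, ψ z ≤ √ε * ψ s := by
    intro ε hε
    let m := compLeft ⟨fun w => ((min w.re ε : ℝ) : ℂ), by fun_prop⟩ (by simp [hε.le]) z
    have htail : ψ (z - m) = 0 := by
      refine hloc _ (isCompact_setOf_le_norm z hε) ?_ _ fun y hy => ?_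
      · refine Set.disjoint_left.mpr fun y hy hyF => ?_
        simp only [Set.mem_ofPred_eq, hzF y hyF, norm_zero] at hy
        linarith
      · have : (z y).re ≤ ε := (re_le_norm _).trans (not_le.mp hy).le
        simp [m, min_eq_left this, ← hre y]
    have hle : ψ m ≤ √ε * ψ s := by
      rw [← sub_nonneg, ← smul_eq_mul, ← map_smul, ← map_sub]
      refine hψ _ fun y => ?_
      simp only [ZeroAtInftyContinuousMap.sub_apply, ZeroAtInftyContinuousMap.smul_apply,
        compLeft_apply, ContinuousMap.coe_mk, smul_eq_mul, s, m]
      rw [← ofReal_mul, ← ofReal_sub, zero_le_real, sub_nonneg]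
      exact Real.min_le_sqrt_mul_sqrt (hre_nonneg y) hε.le
    rwa [map_sub, sub_eq_zero.mp htail] at *
  have hlim : Tendsto (fun ε : ℝ => (√ε : ℂ) * ψ s) (𝓝[>] 0) (𝓝 0) := by
    have := ((continuous_ofReal.comp Real.continuous_sqrt).tendsto 0).mul_const (ψ s)
    simpa using this.mono_left nhdsWithin_le_nhds
  exact le_antisymm (ge_of_tendsto hlim (eventually_nhdsWithin_of_forall hbound)) (hψ z hz)

theorem apply_eq_zero_of_eqOn_zero {Y : Type*} [TopologicalSpace Y]
    {ψ : C₀(Y, ℂ) →ₗ[ℂ] ℂ} (hψ : ∀ z : C₀(Y, ℂ), (∀ y, 0 ≤ z y) → 0 ≤ ψ z) {F : Set Y}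
    (hloc : ∀ K, IsCompact K → Disjoint K F → ∀ z : C₀(Y, ℂ), (∀ y ∉ K, z y = 0) → ψ z = 0)
    {z : C₀(Y, ℂ)} (hzF : ∀ y ∈ F, z y = 0) : ψ z = 0 := by
  set P := compLeft (α := Y) rePosPart rePosPart_zero
  have hP (c : ℂ) : ψ (P (c • z)) = 0 :=
    apply_eq_zero_of_nonneg_of_eqOn_zero hψ hloc (fun y => zero_le_rePosPart _)
      fun y hy => by simp [P, hzF y hy, rePosPart_zero]
  have hdecomp : P ((1 : ℂ) • z) - P ((-1 : ℂ) • z) + I • (P ((-I) • z) - P (I • z)) = z :=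
    ZeroAtInftyContinuousMap.ext fun y => by simpa [P] using rePosPart_sub_add_I_mul (z y)
  rw [← hdecomp, map_add, map_sub, map_smul, map_sub]
  simp only [hP, sub_zero, smul_zero, add_zero]

theorem apply_eq_zero_of_eq_zero_off_isCompact {X Y : Type*} [TopologicalSpace X] [T2Space X]
    [LocallyCompactSpace X] [TopologicalSpace Y] {p : Y → X} (hp : Continuous p)
    {φ : C₀(Y, ℂ) →ₗ[ℂ] C₀(X, ℂ)}
    (hmod : ∀ (f : C₀(X, ℂ)) (z w : C₀(Y, ℂ)),
      (∀ y, w y = f (p y) * z y) → ∀ x, φ w x = f x * φ z x)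
    {x : X} {K : Set Y} (hK : IsCompact K) (hKx : Disjoint K {y | p y = x}) {z : C₀(Y, ℂ)}
    (hz : ∀ y ∉ K, z y = 0) : φ z x = 0 := by
  have hx : x ∉ p '' K := fun ⟨y, hy, hyx⟩ => Set.disjoint_left.mp hKx hy hyx
  obtain ⟨f, hf1, hf0, hfc, -⟩ := exists_continuous_one_zero_of_isCompact (hK.image hp)
    isClosed_singleton (Set.disjoint_singleton_right.mpr hx)
  let g : C₀(X, ℂ) := ⟨⟨fun x => (f x : ℂ), by fun_prop⟩,
    (hfc.comp_left (g := ((↑) : ℝ → ℂ)) ofReal_zero).is_zero_at_infty⟩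
  have hgz (y : Y) : z y = g (p y) * z y := by
    by_cases hy : y ∈ K
    · simp [g, hf1 (Set.mem_image_of_mem p hy)]
    · simp [hz y hy]
  have hgx : g x = 0 := by simp [g, hf0 rfl]
  simpa [hgx] using hmod g z z hgz x

open ZeroAtInftyContinuousMap (restrict restrict_surjective) in
theorem stmt0_general {X Y : Type} [TopologicalSpace X] [T2Space X] [LocallyCompactSpace X]
    [TopologicalSpace Y] [T2Space Y] [LocallyCompactSpace Y]
    (p : Y → X) (hp : Continuous p)
    (φ : C₀(Y, ℂ) →ₗ[ℂ] C₀(X, ℂ))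
    (hpos : ∀ z : C₀(Y, ℂ), (∀ y, 0 ≤ z y) → ∀ x, 0 ≤ φ z x)
    (hmod : ∀ (f : C₀(X, ℂ)) (z w : C₀(Y, ℂ)),
      (∀ y, w y = f (p y) * z y) → ∀ x, φ w x = f x * φ z x)
    (x : X) :
    ∃! φx : C₀({y : Y // p y = x}, ℂ) →ₗ[ℂ] ℂ,
      (∀ ζ : C₀({y : Y // p y = x}, ℂ), (∀ y, 0 ≤ ζ y) → 0 ≤ φx ζ) ∧
      (∀ (z : C₀(Y, ℂ)) (ζ : C₀({y : Y // p y = x}, ℂ)),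
        (∀ y : {y : Y // p y = x}, ζ y = z y.1) → φ z x = φx ζ) := by
  have hF : IsClosed {y | p y = x} := isClosed_singleton.preimage hp
  let R : C₀(Y, ℂ) →ₗ[ℂ] C₀({y : Y // p y = x}, ℂ) := restrict hF
  have hR : Function.Surjective R := restrict_surjective hF
  let ψ : C₀(Y, ℂ) →ₗ[ℂ] ℂ := { toFun z := φ z x, map_add' := by simp, map_smul' := by simp }
  have hker : LinearMap.ker R ≤ LinearMap.ker ψ := fun z hz =>
    apply_eq_zero_of_eqOn_zero (fun w hw => hpos w hw x)
      (fun _ hK hKx _ hw => apply_eq_zero_of_eq_zero_off_isCompact hp hmod hK hKx hw)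
      fun y hy => DFunLike.congr_fun hz ⟨y, hy⟩
  obtain ⟨φx, hφx⟩ := LinearMap.exists_comp_eq_of_ker_le hR hker
  have hφxR (z : C₀(Y, ℂ)) : φx (R z) = φ z x := LinearMap.congr_fun hφx z
  refine ⟨φx, ⟨fun ζ hζ => ?_, fun z ζ hzζ => ?_⟩, fun φ' ⟨_, hφ'⟩ => ?_⟩
  · obtain ⟨z, rfl⟩ := hR ζ
    have hRz : R (compLeft rePosPart rePosPart_zero z) = R z :=
      ZeroAtInftyContinuousMap.ext fun y => rePosPart_of_nonneg (hζ y)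
    rw [← hRz, hφxR]
    exact hpos _ (fun y => zero_le_rePosPart _) x
  · rw [show ζ = R z from ZeroAtInftyContinuousMap.ext hzζ, hφxR]
  · refine (LinearMap.cancel_right hR).mp (LinearMap.ext fun z => ?_)
    rw [LinearMap.comp_apply, LinearMap.comp_apply, hφxR, hφ' z (R z) fun _ => rfl]

/-- Let `X`, `Y` be locally compact Hausdorff spaces and `p : Y → X` a
continuous surjection.  Let `φ : C₀(Y) → C₀(X)` be a positive `C₀(X)`-functional, i.e. a
linear map which is positive and satisfies `φ((f ∘ p) · z) = f · φ(z)`.  Then for every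
`x ∈ X` there is a unique positive linear functional `φₓ : C₀(p⁻¹{x}) → ℂ` with
`(φ z) x = φₓ (z|_{p⁻¹{x}})` for every `z ∈ C₀(Y)`. -/
theorem stmt0 {X Y : Type} [TopologicalSpace X] [T2Space X] [LocallyCompactSpace X]
    [TopologicalSpace Y] [T2Space Y] [LocallyCompactSpace Y]
    (p : Y → X) (hp : Continuous p) (hps : Function.Surjective p)
    (φ : C₀(Y, ℂ) →ₗ[ℂ] C₀(X, ℂ))
    (hpos : ∀ z : C₀(Y, ℂ), (∀ y, 0 ≤ z y) → ∀ x, 0 ≤ φ z x)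
    (hmod : ∀ (f : C₀(X, ℂ)) (z w : C₀(Y, ℂ)),
      (∀ y, w y = f (p y) * z y) → ∀ x, φ w x = f x * φ z x)
    (x : X) :
    ∃! φx : C₀({y : Y // p y = x}, ℂ) →ₗ[ℂ] ℂ,
      (∀ ζ : C₀({y : Y // p y = x}, ℂ), (∀ y, 0 ≤ ζ y) → 0 ≤ φx ζ) ∧
      (∀ (z : C₀(Y, ℂ)) (ζ : C₀({y : Y // p y = x}, ℂ)),
        (∀ y : {y : Y // p y = x}, ζ y = z y.1) → φ z x = φx ζ) :=
  stmt0_general p hp φ hpos hmod x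
end

section
/- Assume the DR setup. Let F be a unital C*-algebra and η : B → F a surjective unital *-homomorphism that is injective on A and satisfies {y ∈ F : y η(a) = η(a) y for all a ∈ A} = η(Z) (i.e., (F,η) is a Hilbert extension of A). Then for every c ∈ C there exists a unique f ∈ C(X) with η(c) = η(f), and the resulting map φ : C → C(X), φ(c) := f, is a unital *-homomorphism satisfying φ(f) = f for every f ∈ C(X) and η∘φ = η|_C. -/
noncomputable section

variable {B : Type} [CStarAlgebra B]

/-- The canonical endomorphism `σ(b) := ∑ ψ_i b ψ_i*` of the Cuntz setup. -/
def cuntzSigma {d : ℕ} (ψ : Fin d → B) (b : B) : B := ∑ i, ψ i * b * star (ψ i)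

/-- `ψ_I := ψ_{i₁} ⋯ ψ_{i_r}` for a multi-index `I = (i₁,…,i_r)`. -/
def psiWord {d : ℕ} (ψ : Fin d → B) {r : ℕ} (I : Fin r → Fin d) : B :=
  (List.ofFn fun k => ψ (I k)).prod

/-- The flip operators `ε(r,s) := ∑_{|I|=r,|J|=s} ψ_J ψ_I ψ_J* ψ_I*`. -/
def cuntzEps {d : ℕ} (ψ : Fin d → B) (r s : ℕ) : B :=
  ∑ I : Fin r → Fin d, ∑ J : Fin s → Fin d,
    psiWord ψ J * psiWord ψ I * star (psiWord ψ J) * star (psiWord ψ I)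

/-- In the DR setup, every Hilbert extension `(F, η)` of `A` gives rise
to a unique section: for every `c ∈ C` there is a unique `f ∈ C(X)` with `η(c) = η(f)`;
the resulting map `φ : C → C(X)` is a unital *-homomorphism which is the identity on
`C(X)` and satisfies `η ∘ φ = η` on `C`. -/
theorem stmt10 {d : ℕ} (ψ : Fin d → B)
    (hC1 : ∀ i j, star (ψ i) * ψ j = if i = j then (1 : B) else 0)
    (hC2 : ∑ i, ψ i * star (ψ i) = (1 : B))
    (A : StarSubalgebra ℂ B) (hAclosed : IsClosed (A : Set B))
    (hσA : ∀ a ∈ A, cuntzSigma ψ a ∈ A)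
    (hgen : (StarAlgebra.adjoin ℂ ((A : Set B) ∪ Set.range ψ)).topologicalClosure = ⊤)
    (α : Matrix.specialUnitaryGroup (Fin d) ℂ → B ≃⋆ₐ[ℂ] B)
    (hα1 : ∀ b : B, α 1 b = b)
    (hαmul : ∀ g h b, α (g * h) b = α g (α h b))
    (hαcont : ∀ b : B, Continuous fun g => α g b)
    (hαψ : ∀ (g : Matrix.specialUnitaryGroup (Fin d) ℂ) (i : Fin d),
      α g (ψ i) = ∑ j, ((g : Matrix (Fin d) (Fin d) ℂ) j i) • ψ j)
    (hfix : ∀ b : B, (∀ g, α g b = b) ↔ b ∈ A)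
    (Z : Set B) (hZ : Z = {a : B | a ∈ A ∧ ∀ a' ∈ A, a * a' = a' * a})
    (Cc : Set B) (hCc : Cc = {c : B | ∀ b : B, c * b = b * c})
    (CX : Set B) (hCX : CX = {f : B | f ∈ Z ∧ cuntzSigma ψ f = f})
    {F : Type} [CStarAlgebra F]
    (η : B →⋆ₐ[ℂ] F) (hηsurj : Function.Surjective η)
    (hηinj : Set.InjOn η (A : Set B))
    (hcomm : {y : F | ∀ a ∈ A, y * η a = η a * y} = η '' Z) :
    (∀ c ∈ Cc, ∃! f : B, f ∈ CX ∧ η c = η f) ∧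
    ∃ φ : B → B,
      (∀ c ∈ Cc, φ c ∈ CX ∧ η (φ c) = η c) ∧
      (∀ f ∈ CX, φ f = f) ∧
      (∀ c ∈ Cc, ∀ c' ∈ Cc, φ (c + c') = φ c + φ c') ∧
      (∀ c ∈ Cc, ∀ c' ∈ Cc, φ (c * c') = φ c * φ c') ∧
      (∀ (z : ℂ), ∀ c ∈ Cc, φ (z • c) = z • φ c) ∧
      (∀ c ∈ Cc, φ (star c) = star (φ c)) ∧
      φ 1 = 1 := by

  classical
  subst hZ hCc hCX
  have hCXA : ∀ f, (f ∈ {f : B | f ∈ {a : B | a ∈ A ∧ ∀ a' ∈ A, a * a' = a' * a} ∧ cuntzSigma ψ f = f}) → f ∈ A := fun f hf => hf.1.1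
  -- key existence and uniqueness
  have key : ∀ c ∈ {c : B | ∀ b : B, c * b = b * c},
      ∃! f : B, (f ∈ {f : B | f ∈ {a : B | a ∈ A ∧ ∀ a' ∈ A, a * a' = a' * a} ∧ cuntzSigma ψ f = f}) ∧ η c = η f := by
    intro c hc
    have hmem : η c ∈ {y : F | ∀ a ∈ A, y * η a = η a * y} := by
      intro a _
      rw [← map_mul, ← map_mul, hc a]
    rw [hcomm] at hmem
    obtain ⟨z, hzZ, hzc⟩ := hmem
    have hσc : cuntzSigma ψ c = c := by
      unfold cuntzSigma
      have h1 : ∀ i, ψ i * c * star (ψ i) = c * (ψ i * star (ψ i)) := by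
        intro i
        rw [← hc (ψ i), mul_assoc]
      simp_rw [h1, ← Finset.mul_sum, hC2, mul_one]
    have hησz : η (cuntzSigma ψ z) = η z := by
      unfold cuntzSigma
      simp only [map_sum, map_mul, hzc]
      have : (∑ i, η (ψ i) * η c * η (star (ψ i))) = η (cuntzSigma ψ c) := by
        unfold cuntzSigma
        simp only [map_sum, map_mul]
      rw [this, hσc]
    have hσz : cuntzSigma ψ z = z := hηinj (hσA z hzZ.1) hzZ.1 hησz
    refine ⟨z, ⟨⟨hzZ, hσz⟩, hzc.symm⟩, ?_⟩
    rintro f' ⟨hf', he'⟩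
    exact hηinj (hCXA f' hf') hzZ.1 (by rw [← he', hzc.symm])
  refine ⟨key, ?_⟩
  set CXs := {f : B | f ∈ {a : B | a ∈ A ∧ ∀ a' ∈ A, a * a' = a' * a} ∧ cuntzSigma ψ f = f} with hCXs
  set φ : B → B := fun c => if h : ∃ f : B, f ∈ CXs ∧ η c = η f then h.choose else c with hφ
  have hφspec : ∀ c : B, (∃ f : B, f ∈ CXs ∧ η c = η f) → φ c ∈ CXs ∧ η c = η (φ c) := by
    intro c h
    simp only [hφ, dif_pos h]
    exact h.choose_spec
  have hone : (1 : B) ∈ CXs := by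
    refine ⟨⟨one_mem A, fun a' _ => by rw [one_mul, mul_one]⟩, ?_⟩
    unfold cuntzSigma
    simp_rw [mul_one]
    exact hC2
  have hφCc : ∀ c ∈ {c : B | ∀ b : B, c * b = b * c}, φ c ∈ CXs ∧ η (φ c) = η c := by
    intro c hc
    have h := hφspec c ((key c hc).exists)
    exact ⟨h.1, h.2.symm⟩
  have hφid : ∀ f ∈ CXs, φ f = f := by
    intro f hf
    have h := hφspec f ⟨f, hf, rfl⟩
    exact hηinj (hCXA _ h.1) (hCXA f hf) h.2.symm
  -- closure of the center
  have hCcadd : ∀ c ∈ {c : B | ∀ b : B, c * b = b * c}, ∀ c' ∈ {c : B | ∀ b : B, c * b = b * c},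
      (c + c') ∈ {c : B | ∀ b : B, c * b = b * c} := by
    intro c hc c' hc' b
    rw [add_mul, mul_add, hc b, hc' b]
  have hCcmul : ∀ c ∈ {c : B | ∀ b : B, c * b = b * c}, ∀ c' ∈ {c : B | ∀ b : B, c * b = b * c},
      (c * c') ∈ {c : B | ∀ b : B, c * b = b * c} := by
    intro c hc c' hc' b
    rw [mul_assoc, hc' b, ← mul_assoc, hc b, mul_assoc]
  have injA : ∀ x ∈ A, ∀ y ∈ A, η x = η y → x = y := fun x hx y hy => hηinj hx hy
  refine ⟨φ, hφCc, hφid, ?_, ?_, ?_, ?_, hφid 1 hone⟩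
  · intro c hc c' hc'
    have h1 := hφCc _ (hCcadd c hc c' hc')
    have h2 := hφCc c hc
    have h3 := hφCc c' hc'
    refine injA _ (hCXA _ h1.1) _ (add_mem (hCXA _ h2.1) (hCXA _ h3.1)) ?_
    rw [h1.2, map_add, map_add, h2.2, h3.2]
  · intro c hc c' hc'
    have h1 := hφCc _ (hCcmul c hc c' hc')
    have h2 := hφCc c hc
    have h3 := hφCc c' hc'
    refine injA _ (hCXA _ h1.1) _ (mul_mem (hCXA _ h2.1) (hCXA _ h3.1)) ?_
    rw [h1.2, map_mul, map_mul, h2.2, h3.2]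
  · intro z c hc
    have hzc : (z • c) ∈ {c : B | ∀ b : B, c * b = b * c} := by
      intro b
      rw [smul_mul_assoc, mul_smul_comm, hc b]
    have h1 := hφCc _ hzc
    have h2 := hφCc c hc
    refine injA _ (hCXA _ h1.1) _ (SMulMemClass.smul_mem z (hCXA _ h2.1)) ?_
    rw [h1.2, map_smul, map_smul, h2.2]
  · intro c hc
    have hsc : (star c) ∈ {c : B | ∀ b : B, c * b = b * c} := by
      intro b
      have := hc (star b)
      calc star c * b = star (star b * c) := by rw [star_mul, star_star]
        _ = star (c * star b) := by rw [this]
        _ = b * star c := by rw [star_mul, star_star]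
    have h1 := hφCc _ hsc
    have h2 := hφCc c hc
    refine injA _ (hCXA _ h1.1) _ (star_mem (hCXA _ h2.1)) ?_
    rw [h1.2, map_star, map_star, h2.2]
end
end

section
/- Assume the Cuntz setup, let A be a closed unital *-subalgebra of B with σ(A) ⊆ A, set ρ := σ|_A, and assume B is generated as a C*-algebra by A together with ψ₁,…,ψ_d. Let n ∈ ℕ, let W ∈ A satisfy ρⁿ(a)·W = W·a for all a ∈ A and ρ(W) = ε(n,1)·W (i.e., W ∈ (ι,ρⁿ)_ε), and let φ be an element of the linear span of {ψ_I : I a multi-index of length n}. Then W*φ commutes with every element of A and σ(W*φ) = W*φ; consequently W*φ lies in the center of B. -/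
noncomputable section

variable {B : Type} [CStarAlgebra B]

section lemmas
variable {d : ℕ} (ψ : Fin d → B)

lemma cuntzSigma_def (b : B) : cuntzSigma ψ b = ∑ i, ψ i * b * star (ψ i) := rfl

lemma psiWord_zero (I : Fin 0 → Fin d) : psiWord ψ I = 1 := by simp [psiWord]

lemma psiWord_succ {r : ℕ} (I : Fin (r+1) → Fin d) :
    psiWord ψ I = ψ (I 0) * psiWord ψ (fun k => I k.succ) := by
  simp [psiWord, List.ofFn_succ]

lemma psiWord_one (J : Fin 1 → Fin d) : psiWord ψ J = ψ (J 0) := by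
  simp [psiWord]

lemma hC1' (hC1 : ∀ i j, star (ψ i) * ψ j = if i = j then (1 : B) else 0)
    (i j : Fin d) (c : B) :
    star (ψ i) * (ψ j * c) = if i = j then c else 0 := by
  rw [← mul_assoc, hC1]; split <;> simp

lemma word_orth (hC1 : ∀ i j, star (ψ i) * ψ j = if i = j then (1 : B) else 0)
    {r : ℕ} (I J : Fin r → Fin d) (c : B) :
    star (psiWord ψ I) * (psiWord ψ J * c) = if I = J then c else 0 := by
  induction r with
  | zero =>
      have : I = J := funext fun k => k.elim0
      simp [psiWord_zero, this]
  | succ r ih =>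
      rw [psiWord_succ ψ I, psiWord_succ ψ J, star_mul, mul_assoc,
        mul_assoc (ψ (J 0))]
      rw [hC1' ψ hC1]
      by_cases h0 : I 0 = J 0
      · rw [if_pos h0, ih]
        refine if_congr ?_ rfl rfl
        constructor
        · intro h; funext k
          refine Fin.cases h0 (fun k => congrFun h k) k
        · intro h; funext k; exact congrFun h k.succ
      · rw [if_neg h0, mul_zero, if_neg]
        intro h; exact h0 (congrFun h 0)

lemma word_orth' (hC1 : ∀ i j, star (ψ i) * ψ j = if i = j then (1 : B) else 0)
    {r : ℕ} (I J : Fin r → Fin d) :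
    star (psiWord ψ I) * psiWord ψ J = if I = J then 1 else 0 := by
  have := word_orth ψ hC1 I J 1
  simpa using this

lemma sigma_psi (hC1 : ∀ i j, star (ψ i) * ψ j = if i = j then (1 : B) else 0)
    (b : B) (j : Fin d) : cuntzSigma ψ b * ψ j = ψ j * b := by
  rw [cuntzSigma_def, Finset.sum_mul]
  have : ∀ i : Fin d, ψ i * b * star (ψ i) * ψ j
      = if i = j then ψ i * b else 0 := by
    intro i; rw [mul_assoc, hC1]; split <;> simp
  simp [this]

lemma psiStar_sigma (hC1 : ∀ i j, star (ψ i) * ψ j = if i = j then (1 : B) else 0)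
    (b : B) (j : Fin d) :
    star (ψ j) * cuntzSigma ψ b = b * star (ψ j) := by
  rw [cuntzSigma_def, Finset.mul_sum]
  have : ∀ i : Fin d, star (ψ j) * (ψ i * b * star (ψ i))
      = if j = i then b * star (ψ i) else 0 := by
    intro i; rw [mul_assoc (ψ i), ← mul_assoc, hC1]; split <;> simp
  simp [this]

lemma sigma_star (b : B) : cuntzSigma ψ (star b) = star (cuntzSigma ψ b) := by
  simp [cuntzSigma_def, star_sum, star_mul, mul_assoc]

lemma sigma_mul (hC1 : ∀ i j, star (ψ i) * ψ j = if i = j then (1 : B) else 0)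
    (b c : B) :
    cuntzSigma ψ (b * c) = cuntzSigma ψ b * cuntzSigma ψ c := by
  rw [cuntzSigma_def ψ c, Finset.mul_sum, cuntzSigma_def ψ (b * c)]
  refine Finset.sum_congr rfl fun i _ => ?_
  conv_rhs => rw [← mul_assoc, ← mul_assoc, sigma_psi ψ hC1]
  simp [mul_assoc]

lemma iterate_sigma_star (n : ℕ) (a : B) :
    (cuntzSigma ψ)^[n] (star a) = star ((cuntzSigma ψ)^[n] a) := by
  induction n generalizing a with
  | zero => rfl
  | succ n ih =>
      rw [Function.iterate_succ_apply', Function.iterate_succ_apply', ih,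
        sigma_star ψ]

lemma iterate_sigma_word (hC1 : ∀ i j, star (ψ i) * ψ j = if i = j then (1 : B) else 0)
    (n : ℕ) (a : B) (I : Fin n → Fin d) :
    (cuntzSigma ψ)^[n] a * psiWord ψ I = psiWord ψ I * a := by
  induction n generalizing a with
  | zero => simp [psiWord_zero]
  | succ n ih =>
      rw [Function.iterate_succ_apply', psiWord_succ, ← mul_assoc,
        sigma_psi ψ hC1, mul_assoc, ih, ← mul_assoc]

end lemmas

section eps
variable {d : ℕ} (ψ : Fin d → B)

lemma eps_star_sigma_word
    (hC1 : ∀ i j, star (ψ i) * ψ j = if i = j then (1 : B) else 0)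
    (hC2 : ∑ i, ψ i * star (ψ i) = (1 : B))
    (n : ℕ) (K : Fin n → Fin d) :
    star (cuntzEps ψ n 1) * cuntzSigma ψ (psiWord ψ K) = psiWord ψ K := by
  rw [cuntzEps, cuntzSigma_def]
  simp only [psiWord_one, star_sum, star_mul, star_star, Finset.sum_mul,
    Finset.mul_sum, mul_assoc]
  have step1 : ∀ (I : Fin n → Fin d) (J : Fin 1 → Fin d) (i : Fin d),
      psiWord ψ I * (ψ (J 0) * (star (psiWord ψ I) * (star (ψ (J 0)) *
        (ψ i * (psiWord ψ K * star (ψ i))))))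
      = if J 0 = i then
          psiWord ψ I * (ψ (J 0) * (star (psiWord ψ I) * (psiWord ψ K * star (ψ i))))
        else 0 := by
    intro I J i
    rw [hC1' ψ hC1]
    split <;> simp
  simp only [step1, Finset.sum_ite_eq, Finset.mem_univ, if_true]
  have step2 : ∀ (I : Fin n → Fin d) (J : Fin 1 → Fin d),
      psiWord ψ I * (ψ (J 0) * (star (psiWord ψ I) * (psiWord ψ K * star (ψ (J 0)))))
      = if I = K then psiWord ψ K * (ψ (J 0) * star (ψ (J 0))) else 0 := by
    intro I J
    rw [word_orth ψ hC1]
    split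
    · next h => subst h; rfl
    · simp
  rw [Finset.sum_comm]
  rw [Finset.sum_congr rfl fun I _ => Finset.sum_comm]
  simp only [Finset.sum_ite_eq, Finset.mem_univ, if_true]
  simp only [step2]
  rw [Finset.sum_comm]
  simp only [Finset.sum_ite_eq', Finset.mem_univ, if_true]
  have : ∑ J : Fin 1 → Fin d, psiWord ψ K * (ψ (J 0) * star (ψ (J 0)))
      = ∑ j : Fin d, psiWord ψ K * (ψ j * star (ψ j)) :=
    Fintype.sum_equiv (Equiv.funUnique (Fin 1) (Fin d)) _ _ (fun J => rfl)
  rw [this, ← Finset.mul_sum]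
  rw [hC2, mul_one]


end eps

section lin
variable {d : ℕ} (ψ : Fin d → B)

lemma sigma_add (x y : B) :
    cuntzSigma ψ (x + y) = cuntzSigma ψ x + cuntzSigma ψ y := by
  simp [cuntzSigma_def, mul_add, add_mul, Finset.sum_add_distrib]

lemma sigma_smul (c : ℂ) (x : B) :
    cuntzSigma ψ (c • x) = c • cuntzSigma ψ x := by
  simp [cuntzSigma_def, mul_smul_comm, smul_mul_assoc, Finset.smul_sum]

lemma sigma_zero : cuntzSigma ψ (0 : B) = 0 := by simp [cuntzSigma_def]

end lin

/-- The elements commuting with `x` and `x*`, as a star subalgebra. -/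
def commStarSub (x : B) : StarSubalgebra ℂ B where
  carrier := {b | x * b = b * x ∧ x * star b = star b * x}
  mul_mem' := by
    rintro a b ⟨ha1, ha2⟩ ⟨hb1, hb2⟩
    refine ⟨?_, ?_⟩
    · rw [← mul_assoc, ha1, mul_assoc, hb1, ← mul_assoc]
    · rw [star_mul, ← mul_assoc, hb2, mul_assoc, ha2, ← mul_assoc]
  one_mem' := by simp
  add_mem' := by
    rintro a b ⟨ha1, ha2⟩ ⟨hb1, hb2⟩
    constructor <;> simp [mul_add, add_mul, star_add, ha1, ha2, hb1, hb2]
  zero_mem' := by simp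
  algebraMap_mem' := by
    intro r
    constructor <;>
      simp [Algebra.algebraMap_eq_smul_one, star_smul, mul_smul_comm, smul_mul_assoc]
  star_mem' := by
    rintro b ⟨h1, h2⟩
    exact ⟨h2, by simpa using h1⟩

lemma commStarSub_mem {x b : B} (h1 : x * b = b * x) (h2 : x * star b = star b * x) :
    b ∈ commStarSub x := ⟨h1, h2⟩

lemma commStarSub_closed (x : B) : IsClosed ((commStarSub x : StarSubalgebra ℂ B) : Set B) := by
  have h1 : IsClosed {b : B | x * b = b * x} :=
    isClosed_eq (continuous_const.mul continuous_id) (continuous_id.mul continuous_const)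
  have h2 : IsClosed {b : B | x * star b = star b * x} :=
    isClosed_eq (continuous_const.mul continuous_star) (continuous_star.mul continuous_const)
  exact h1.inter h2

/-- In the Cuntz setup with `A` a closed unital *-subalgebra,
`σ(A) ⊆ A`, `ρ := σ|_A`, and `B` generated by `A` and the `ψ_i`: if `W ∈ (ι,ρⁿ)_ε`
(i.e. `W ∈ A`, `ρⁿ(a)·W = W·a` for `a ∈ A`, and `ρ(W) = ε(n,1)·W`) and `φ` lies in the
linear span of the words `ψ_I` of length `n`, then `W*φ` commutes with every element of
`A` and is `σ`-invariant; consequently `W*φ` is central in `B`. -/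
theorem stmt12 {d : ℕ} (ψ : Fin d → B)
    (hC1 : ∀ i j, star (ψ i) * ψ j = if i = j then (1 : B) else 0)
    (hC2 : ∑ i, ψ i * star (ψ i) = (1 : B))
    (A : StarSubalgebra ℂ B) (hAclosed : IsClosed (A : Set B))
    (hσA : ∀ a ∈ A, cuntzSigma ψ a ∈ A)
    (hgen : (StarAlgebra.adjoin ℂ ((A : Set B) ∪ Set.range ψ)).topologicalClosure = ⊤)
    (n : ℕ) (W : B) (hWA : W ∈ A)
    (hWint : ∀ a ∈ A, (cuntzSigma ψ)^[n] a * W = W * a)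
    (hWeps : cuntzSigma ψ W = cuntzEps ψ n 1 * W)
    (φ : B)
    (hφ : φ ∈ Submodule.span ℂ (Set.range fun I : Fin n → Fin d => psiWord ψ I)) :
    (∀ a ∈ A, star W * φ * a = a * (star W * φ)) ∧
    cuntzSigma ψ (star W * φ) = star W * φ ∧
    (∀ b : B, star W * φ * b = b * (star W * φ)) := by
  -- W* intertwines the other way
  have hWc : ∀ a ∈ A, star W * (cuntzSigma ψ)^[n] a = a * star W := by
    intro a ha
    have h2 := congrArg star (hWint (star a) (star_mem ha))
    rw [star_mul, star_mul, star_star, ← iterate_sigma_star, star_star] at h2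
    exact h2
  -- words intertwine σ^[n]
  have hφa : ∀ a : B, (cuntzSigma ψ)^[n] a * φ = φ * a := by
    intro a
    refine Submodule.span_induction
      (p := fun x _ => (cuntzSigma ψ)^[n] a * x = x * a) ?_ ?_ ?_ ?_ hφ
    · rintro x ⟨I, rfl⟩
      exact iterate_sigma_word ψ hC1 n a I
    · simp
    · intro x y _ _ hx hy; rw [mul_add, add_mul, hx, hy]
    · intro c x _ hx; rw [mul_smul_comm, smul_mul_assoc, hx]
  -- claim 1 : commutes with A
  have claim1 : ∀ a ∈ A, star W * φ * a = a * (star W * φ) := by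
    intro a ha
    rw [mul_assoc, ← hφa a, ← mul_assoc, hWc a ha, mul_assoc]
  -- ε(n,1)* σ(φ) = φ
  have hepsφ : star (cuntzEps ψ n 1) * cuntzSigma ψ φ = φ := by
    refine Submodule.span_induction
      (p := fun x _ => star (cuntzEps ψ n 1) * cuntzSigma ψ x = x) ?_ ?_ ?_ ?_ hφ
    · rintro x ⟨K, rfl⟩
      exact eps_star_sigma_word ψ hC1 hC2 n K
    · simp [sigma_zero]
    · intro x y _ _ hx hy; rw [sigma_add, mul_add, hx, hy]
    · intro c x _ hx; rw [sigma_smul, mul_smul_comm, hx]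
  -- claim 2 : σ-invariance
  have claim2 : cuntzSigma ψ (star W * φ) = star W * φ := by
    rw [sigma_mul ψ hC1, sigma_star, hWeps, star_mul, mul_assoc, hepsφ]
  refine ⟨claim1, claim2, ?_⟩
  -- claim 3 : centrality via the generation hypothesis
  set x : B := star W * φ with hx
  have hxψ : ∀ j, x * ψ j = ψ j * x := by
    intro j
    conv_lhs => rw [← claim2]
    exact sigma_psi ψ hC1 x j
  have hxψs : ∀ j, x * star (ψ j) = star (ψ j) * x := by
    intro j
    conv_rhs => rw [← claim2]
    exact (psiStar_sigma ψ hC1 x j).symm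
  have hsub : StarAlgebra.adjoin ℂ ((A : Set B) ∪ Set.range ψ) ≤ commStarSub x := by
    rw [StarAlgebra.adjoin_le_iff]
    rintro b (hb | ⟨j, rfl⟩)
    · exact ⟨claim1 b hb, claim1 (star b) (star_mem hb)⟩
    · exact ⟨hxψ j, hxψs j⟩
  have htop : (⊤ : StarSubalgebra ℂ B) ≤ commStarSub x := by
    rw [← hgen]
    exact StarSubalgebra.topologicalClosure_minimal hsub (commStarSub_closed x)
  intro b
  exact (htop (show b ∈ ⊤ from trivial)).1
end
end
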